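/- arXiv:1407.2339 — 2 statements merged into one kernel-verified Lean document; each statement's English description precedes it below -/
import Mathlib

section
/- Let Ω ⊂ ℂⁿ be bounded with 0 ∈ Ω and |z| < e^{-1} on Ω. For ε > 0 set φ(z) = log(|z|² + ε²), η = -φ + log(-φ), and λ = (1-φ)². Then on Ω one has the (1,1)-form inequality -i∂∂̄η - λ^{-1} i∂η ∧ ∂̄η ≥ i∂∂̄φ. -/
open Metric

variable {n : ℕ}

/-- The Wirtinger derivative `∂g/∂z̄ⱼ`. -/
noncomputable def dbar (j : Fin n) (g : (Fin n → ℂ) → ℂ) (z : Fin n → ℂ) : ℂ :=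
  (1 / 2) * (fderiv ℝ g z (Pi.single j 1) + Complex.I * fderiv ℝ g z (Pi.single j Complex.I))

/-- The Wirtinger derivative `∂g/∂zⱼ`. -/
noncomputable def dz (j : Fin n) (g : (Fin n → ℂ) → ℂ) (z : Fin n → ℂ) : ℂ :=
  (1 / 2) * (fderiv ℝ g z (Pi.single j 1) - Complex.I * fderiv ℝ g z (Pi.single j Complex.I))

/-- The complex Hessian coefficient `∂²g/∂zⱼ∂z̄ₖ` of a real-valued function. -/
noncomputable def hess (j k : Fin n) (F : (Fin n → ℂ) → ℝ) (z : Fin n → ℂ) : ℂ :=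
  dz j (fun w => dbar k (fun y => ((F y : ℝ) : ℂ)) w) z

/-- `|z|² = ∑ⱼ |zⱼ|²`. -/
noncomputable def normSq (z : Fin n → ℂ) : ℝ := ∑ j, ‖z j‖ ^ 2

/-!
Write `η = g ∘ φ` with `g t = -t + log (-t)`. The chain rule for the complex Hessian gives
`∂∂̄η = g'(φ) ∂∂̄φ + g''(φ) ∂φ ⊗ ∂̄φ` and `∂η = g'(φ) ∂φ`. Since `g'(t) = (1 - t) / t` and
`g''(t) = -1 / t²`, we have `g'(φ)² / λ = -g''(φ)`, so the rank-one terms cancel exactly and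
`-∂∂̄η - λ⁻¹ ∂η ⊗ ∂̄η = (1 - φ⁻¹) ∂∂̄φ`. As `φ < 0` on `Ω`, the factor is at least `1`, and
`∂∂̄φ ≥ 0` by Cauchy–Schwarz: its Hermitian form is `|ζ|² / s - |⟨z, ζ⟩|² / s²` with
`s = |z|² + ε² ≥ |z|²`.
-/

open Filter Topology ComplexConjugate

theorem HasFDerivAt.ofReal_comp {E : Type*} [NormedAddCommGroup E] [NormedSpace ℝ E]
    {F : E → ℝ} {F' : E →L[ℝ] ℝ} {x : E} (h : HasFDerivAt F F' x) :
    HasFDerivAt (fun y => (F y : ℂ)) (Complex.ofRealCLM.comp F') x :=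
  Complex.ofRealCLM.hasFDerivAt.comp x h

section Wirtinger

variable {z : Fin n → ℂ}

theorem dz_eq_of_hasFDerivAt {g : (Fin n → ℂ) → ℂ} {L : (Fin n → ℂ) →L[ℝ] ℂ}
    (h : HasFDerivAt g L z) (j : Fin n) :
    dz j g z = (1 / 2) * (L (Pi.single j 1) - Complex.I * L (Pi.single j Complex.I)) := by
  rw [dz, h.fderiv]

theorem dbar_eq_of_hasFDerivAt {g : (Fin n → ℂ) → ℂ} {L : (Fin n → ℂ) →L[ℝ] ℂ}
    (h : HasFDerivAt g L z) (k : Fin n) :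
    dbar k g z = (1 / 2) * (L (Pi.single k 1) + Complex.I * L (Pi.single k Complex.I)) := by
  rw [dbar, h.fderiv]

theorem dbar_ofReal_eq_conj_dz {F : (Fin n → ℂ) → ℝ} (hF : DifferentiableAt ℝ F z)
    (k : Fin n) : dbar k (fun y => (F y : ℂ)) z = conj (dz k (fun y => (F y : ℂ)) z) := by
  have h := hF.hasFDerivAt.ofReal_comp
  rw [dbar_eq_of_hasFDerivAt h, dz_eq_of_hasFDerivAt h]
  simp only [ContinuousLinearMap.comp_apply, Complex.ofRealCLM_apply, map_mul, map_sub,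
    Complex.conj_ofReal, Complex.conj_I, map_div₀, map_one, map_ofNat]
  ring

theorem dz_ofReal_comp {F : (Fin n → ℂ) → ℝ} {f : ℝ → ℝ} {f' : ℝ}
    (hF : DifferentiableAt ℝ F z) (hf : HasDerivAt f f' (F z)) (j : Fin n) :
    dz j (fun y => (f (F y) : ℂ)) z = f' * dz j (fun y => (F y : ℂ)) z := by
  have hfF : HasFDerivAt (fun y => f (F y)) (f' • fderiv ℝ F z) z :=
    hf.comp_hasFDerivAt z hF.hasFDerivAt
  rw [dz_eq_of_hasFDerivAt hF.hasFDerivAt.ofReal_comp, dz_eq_of_hasFDerivAt hfF.ofReal_comp]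
  simp only [ContinuousLinearMap.comp_apply, Complex.ofRealCLM_apply,
    smul_apply, smul_eq_mul, Complex.ofReal_mul]
  ring

theorem dbar_ofReal_comp {F : (Fin n → ℂ) → ℝ} {f : ℝ → ℝ} {f' : ℝ}
    (hF : DifferentiableAt ℝ F z) (hf : HasDerivAt f f' (F z)) (k : Fin n) :
    dbar k (fun y => (f (F y) : ℂ)) z = f' * dbar k (fun y => (F y : ℂ)) z := by
  have hfF : HasFDerivAt (fun y => f (F y)) (f' • fderiv ℝ F z) z :=
    hf.comp_hasFDerivAt z hF.hasFDerivAt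
  rw [dbar_eq_of_hasFDerivAt hF.hasFDerivAt.ofReal_comp, dbar_eq_of_hasFDerivAt hfF.ofReal_comp]
  simp only [ContinuousLinearMap.comp_apply, Complex.ofRealCLM_apply,
    smul_apply, smul_eq_mul, Complex.ofReal_mul]
  ring

theorem dz_mul {g h : (Fin n → ℂ) → ℂ} (hg : DifferentiableAt ℝ g z)
    (hh : DifferentiableAt ℝ h z) (j : Fin n) :
    dz j (fun y => g y * h y) z = dz j g z * h z + g z * dz j h z := by
  rw [dz_eq_of_hasFDerivAt (hg.hasFDerivAt.fun_mul hh.hasFDerivAt),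
    dz_eq_of_hasFDerivAt hg.hasFDerivAt, dz_eq_of_hasFDerivAt hh.hasFDerivAt]
  simp only [add_apply, smul_apply, smul_eq_mul]
  ring

theorem dz_apply_eq_ite (j k : Fin n) :
    dz j (fun w => w k) z = if j = k then 1 else 0 := by
  rw [dz_eq_of_hasFDerivAt (hasFDerivAt_apply k z)]
  by_cases h : j = k
  · subst h
    simp only [ContinuousLinearMap.proj_apply, Pi.single_eq_same, Complex.I_mul_I, if_true]
    norm_num
  · simp [Ne.symm h, h]

theorem hess_comp {F : (Fin n → ℂ) → ℝ} {f f' : ℝ → ℝ} {f'' : ℝ} (j k : Fin n)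
    (hF : ∀ᶠ w in 𝓝 z, DifferentiableAt ℝ F w)
    (hf : ∀ᶠ w in 𝓝 z, HasDerivAt f (f' (F w)) (F w)) (hf' : HasDerivAt f' f'' (F z))
    (hdbar : DifferentiableAt ℝ (dbar k (fun y => (F y : ℂ))) z) :
    hess j k (fun w => f (F w)) z = f' (F z) * hess j k F z +
      f'' * dz j (fun y => (F y : ℂ)) z * dbar k (fun y => (F y : ℂ)) z := by
  have hdbar_comp : dbar k (fun y => (f (F y) : ℂ)) =ᶠ[𝓝 z]
      fun w => (f' (F w) : ℂ) * dbar k (fun y => (F y : ℂ)) w := by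
    filter_upwards [hF, hf] with w hFw hfw
    exact dbar_ofReal_comp hFw hfw k
  have hf'F : DifferentiableAt ℝ (fun w => (f' (F w) : ℂ)) z :=
    Complex.ofRealCLM.differentiableAt.comp z (hf'.differentiableAt.comp z hF.self_of_nhds)
  rw [hess, dz, hdbar_comp.fderiv_eq, ← dz, dz_mul hf'F hdbar,
    dz_ofReal_comp hF.self_of_nhds hf', hess]
  ring

end Wirtinger

theorem hasDerivAt_neg_add_log_neg {t : ℝ} (ht : t ≠ 0) :
    HasDerivAt (fun s => -s + Real.log (-s)) (-1 + t⁻¹) t := by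
  have h := (hasDerivAt_neg t).add ((hasDerivAt_neg t).log (neg_ne_zero.mpr ht))
  rwa [neg_div_neg_eq, one_div] at h

theorem neg_hess_sub_inv_mul_dz_mul_conj_dz {F : (Fin n → ℂ) → ℝ} {z : Fin n → ℂ}
    (hF : ∀ᶠ w in 𝓝 z, DifferentiableAt ℝ F w) (h0 : F z ≠ 0) (h1 : F z ≠ 1) (j k : Fin n)
    (hdbar : DifferentiableAt ℝ (dbar k (fun y => (F y : ℂ))) z) :
    -hess j k (fun w => -F w + Real.log (-F w)) z -
        (((1 - F z) ^ 2 : ℝ) : ℂ)⁻¹ * dz j (fun y => ((-F y + Real.log (-F y) : ℝ) : ℂ)) z *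
          conj (dz k (fun y => ((-F y + Real.log (-F y) : ℝ) : ℂ)) z) =
      ((1 - (F z)⁻¹ : ℝ) : ℂ) * hess j k F z := by
  have hne : ∀ᶠ w in 𝓝 z, F w ≠ 0 := hF.self_of_nhds.continuousAt.eventually_ne h0
  have hg : ∀ᶠ w in 𝓝 z, HasDerivAt (fun s => -s + Real.log (-s)) (-1 + (F w)⁻¹) (F w) :=
    hne.mono fun w => hasDerivAt_neg_add_log_neg
  have hg' : HasDerivAt (fun s => -1 + s⁻¹) (-(F z ^ 2)⁻¹) (F z) :=
    (hasDerivAt_inv h0).const_add _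
  rw [hess_comp j k hF hg hg' hdbar, dz_ofReal_comp hF.self_of_nhds hg.self_of_nhds,
    dz_ofReal_comp hF.self_of_nhds hg.self_of_nhds, dbar_ofReal_eq_conj_dz hF.self_of_nhds]
  have h0' : (F z : ℂ) ≠ 0 := by exact_mod_cast h0
  have h1' : (1 : ℂ) - F z ≠ 0 := by exact_mod_cast sub_ne_zero.mpr h1.symm
  simp only [map_mul, Complex.conj_ofReal]
  push_cast
  field_simp
  ring

section HermForm

noncomputable def hermForm (A : Fin n → Fin n → ℂ) (ζ : Fin n → ℂ) : ℂ :=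
  ∑ j, ∑ k, A j k * ζ j * conj (ζ k)

theorem hermForm_const_mul (c : ℂ) (A : Fin n → Fin n → ℂ) (ζ : Fin n → ℂ) :
    hermForm (fun j k => c * A j k) ζ = c * hermForm A ζ := by
  simp only [hermForm, Finset.mul_sum, mul_assoc]

theorem hermForm_sub (A B : Fin n → Fin n → ℂ) (ζ : Fin n → ℂ) :
    hermForm (fun j k => A j k - B j k) ζ = hermForm A ζ - hermForm B ζ := by
  simp only [hermForm, sub_mul, Finset.sum_sub_distrib]

theorem hermForm_ite_eq (ζ : Fin n → ℂ) :
    hermForm (fun j k => if j = k then 1 else 0) ζ = normSq ζ := by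
  simp [hermForm, normSq, Complex.mul_conj, Complex.sq_norm]

theorem hermForm_conj_mul (a ζ : Fin n → ℂ) :
    hermForm (fun j k => conj (a j) * a k) ζ = Complex.normSq (∑ j, conj (a j) * ζ j) := by
  rw [← Complex.mul_conj, map_sum, Finset.sum_mul_sum, hermForm]
  simp only [map_mul, Complex.conj_conj]
  exact Finset.sum_congr rfl fun j _ => Finset.sum_congr rfl fun k _ => by ring

end HermForm

theorem normSq_sum_conj_mul_le (a ζ : Fin n → ℂ) :
    Complex.normSq (∑ j, conj (a j) * ζ j) ≤ normSq a * normSq ζ := by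
  have h := norm_inner_le_norm (𝕜 := ℂ) (WithLp.toLp 2 a : EuclideanSpace ℂ (Fin n))
    (WithLp.toLp 2 ζ)
  simp only [PiLp.inner_apply, RCLike.inner_apply, mul_comm (ζ _)] at h
  rw [← Complex.sq_norm, normSq, normSq, ← EuclideanSpace.norm_sq_eq,
    ← EuclideanSpace.norm_sq_eq, ← mul_pow]
  exact pow_le_pow_left₀ (norm_nonneg _) h 2

section LogPotential

theorem hasFDerivAt_normSq (z : Fin n → ℂ) :
    HasFDerivAt normSq (∑ j, 2 • (innerSL ℝ (z j)).comp (ContinuousLinearMap.proj j)) z := by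
  unfold normSq
  exact HasFDerivAt.fun_sum fun j _ => (hasFDerivAt_apply j z).norm_sq

theorem differentiable_normSq : Differentiable ℝ (normSq : (Fin n → ℂ) → ℝ) :=
  fun z => (hasFDerivAt_normSq z).differentiableAt

theorem dz_normSq (z : Fin n → ℂ) (j : Fin n) :
    dz j (fun w => (normSq w : ℂ)) z = conj (z j) := by
  rw [dz_eq_of_hasFDerivAt (hasFDerivAt_normSq z).ofReal_comp]
  simp [Complex.inner, Pi.single_apply, Complex.ext_iff, apply_ite Complex.re]

theorem dbar_normSq (z : Fin n → ℂ) (k : Fin n) :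
    dbar k (fun w => (normSq w : ℂ)) z = z k := by
  rw [dbar_ofReal_eq_conj_dz (differentiable_normSq z), dz_normSq, Complex.conj_conj]

theorem hess_normSq (z : Fin n → ℂ) (j k : Fin n) :
    hess j k normSq z = if j = k then 1 else 0 := by
  rw [hess, funext (dbar_normSq · k), dz_apply_eq_ite]

variable {ε : ℝ}

theorem normSq_add_sq_pos (hε : 0 < ε) (z : Fin n → ℂ) : 0 < normSq z + ε ^ 2 := by
  unfold normSq
  positivity

theorem differentiable_logPotential (hε : 0 < ε) :
    Differentiable ℝ fun w : Fin n → ℂ => Real.log (normSq w + ε ^ 2) := fun z =>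
  ((differentiable_normSq z).add_const _).log (normSq_add_sq_pos hε z).ne'

theorem dbar_logPotential (hε : 0 < ε) (k : Fin n) :
    dbar k (fun w => (Real.log (normSq w + ε ^ 2) : ℂ)) =
      fun z => ((normSq z + ε ^ 2)⁻¹ : ℝ) * z k := by
  funext z
  rw [dbar_ofReal_comp (F := normSq) (differentiable_normSq z)
    ((Real.hasDerivAt_log (normSq_add_sq_pos hε z).ne').comp_add_const _ _), dbar_normSq]

theorem differentiableAt_dbar_logPotential (hε : 0 < ε) (k : Fin n) (z : Fin n → ℂ) :
    DifferentiableAt ℝ (dbar k fun w => (Real.log (normSq w + ε ^ 2) : ℂ)) z := by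
  rw [dbar_logPotential hε k]
  exact (((differentiable_normSq z).add_const _).inv (normSq_add_sq_pos hε z).ne')
    |>.hasFDerivAt.ofReal_comp.differentiableAt.mul (differentiableAt_apply k z)

theorem hess_logPotential (hε : 0 < ε) (z : Fin n → ℂ) (j k : Fin n) :
    hess j k (fun w => Real.log (normSq w + ε ^ 2)) z =
      ((normSq z + ε ^ 2)⁻¹ : ℝ) * (if j = k then 1 else 0) -
        (((normSq z + ε ^ 2) ^ 2)⁻¹ : ℝ) * (conj (z j) * z k) := by
  have hlog : ∀ w : Fin n → ℂ, HasDerivAt (fun t => Real.log (t + ε ^ 2))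
      (normSq w + ε ^ 2)⁻¹ (normSq w) := fun w =>
    (Real.hasDerivAt_log (normSq_add_sq_pos hε w).ne').comp_add_const _ _
  have hinv : HasDerivAt (fun t => (t + ε ^ 2)⁻¹) (-((normSq z + ε ^ 2) ^ 2)⁻¹) (normSq z) :=
    (hasDerivAt_inv (normSq_add_sq_pos hε z).ne').comp_add_const _ _
  rw [hess_comp (F := normSq) j k (.of_forall differentiable_normSq) (.of_forall hlog) hinv
    (by rw [funext (dbar_normSq · k)]; exact differentiableAt_apply k z),
    hess_normSq, dz_normSq, dbar_normSq]
  push_cast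
  ring

theorem re_hermForm_hess_logPotential_nonneg (hε : 0 < ε) (z ζ : Fin n → ℂ) :
    0 ≤ (hermForm (fun j k => hess j k (fun w => Real.log (normSq w + ε ^ 2)) z) ζ).re := by
  rw [funext₂ (hess_logPotential hε z), hermForm_sub, hermForm_const_mul, hermForm_const_mul,
    hermForm_ite_eq, hermForm_conj_mul]
  have hs := normSq_add_sq_pos hε z
  have hζ : 0 ≤ normSq ζ := by unfold normSq; positivity
  have hN : Complex.normSq (∑ j, conj (z j) * ζ j) ≤ (normSq z + ε ^ 2) * normSq ζ :=
    (normSq_sum_conj_mul_le z ζ).trans (by gcongr; linarith [sq_nonneg ε])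
  rw [← Complex.ofReal_mul, ← Complex.ofReal_mul, ← Complex.ofReal_sub, Complex.ofReal_re,
    sub_nonneg]
  calc ((normSq z + ε ^ 2) ^ 2)⁻¹ * Complex.normSq (∑ j, conj (z j) * ζ j)
      ≤ ((normSq z + ε ^ 2) ^ 2)⁻¹ * ((normSq z + ε ^ 2) * normSq ζ) := by gcongr
    _ = (normSq z + ε ^ 2)⁻¹ * normSq ζ := by field_simp

end LogPotential

theorem eta_hessian_inequality_general
    (Ω : Set (Fin n → ℂ))
    (hnorm : ∀ z ∈ Ω, Real.sqrt (normSq z) < Real.exp (-1))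
    (ε : ℝ) (hε : 0 < ε) (hεsmall : ε ^ 2 < 1 - Real.exp (-2))
    (φ η lam : (Fin n → ℂ) → ℝ)
    (hφ : ∀ z, φ z = Real.log (normSq z + ε ^ 2))
    (hη : ∀ z, η z = -φ z + Real.log (-φ z))
    (hlam : ∀ z, lam z = (1 - φ z) ^ 2) :
    ∀ z ∈ Ω, ∀ ζ : Fin n → ℂ,
      (∑ j : Fin n, ∑ k : Fin n, (hess j k φ z) * ζ j * (starRingEnd ℂ) (ζ k)).re ≤
      (∑ j : Fin n, ∑ k : Fin n,
        (-(hess j k η z) - ((lam z : ℝ) : ℂ)⁻¹ *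
          (dz j (fun y => ((η y : ℝ) : ℂ)) z) *
          (starRingEnd ℂ) (dz k (fun y => ((η y : ℝ) : ℂ)) z)) *
        ζ j * (starRingEnd ℂ) (ζ k)).re := by
  intro z hz ζ
  obtain rfl : η = fun w => -φ w + Real.log (-φ w) := funext hη
  have hφ_eq : φ = fun w => Real.log (normSq w + ε ^ 2) := funext hφ
  have hφ_diff : Differentiable ℝ φ := hφ_eq ▸ differentiable_logPotential hε
  have hdbar : ∀ k, DifferentiableAt ℝ (dbar k fun y => (φ y : ℂ)) z := fun k =>
    hφ_eq ▸ differentiableAt_dbar_logPotential hε k z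
  have hφ_neg : φ z < 0 := by
    have hz2 := (Real.sqrt_lt' (Real.exp_pos _)).mp (hnorm z hz)
    rw [← Real.exp_nat_mul] at hz2
    norm_num at hz2
    rw [hφ]
    exact Real.log_neg (normSq_add_sq_pos hε z) (by linarith)
  simp only [hlam z, neg_hess_sub_inv_mul_dz_mul_conj_dz (.of_forall hφ_diff) hφ_neg.ne
    (hφ_neg.trans one_pos).ne _ _ (hdbar _)]
  change (hermForm _ ζ).re ≤ (hermForm (fun j k => _ * hess j k φ z) ζ).re
  rw [hermForm_const_mul, Complex.re_ofReal_mul]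
  refine le_mul_of_one_le_left (hφ_eq ▸ re_hermForm_hess_logPotential_nonneg hε z ζ) ?_
  linarith [inv_lt_zero.mpr hφ_neg]

/-- Let `Ω ⊆ ℂⁿ` be bounded with `0 ∈ Ω` and `|z| < e^{-1}` on `Ω`. For (small) `ε > 0`
set `φ(z) = log(|z|² + ε²)`, `η = -φ + log(-φ)`, `λ = (1-φ)²`. Then on `Ω` one has the
`(1,1)`-form inequality `-i∂∂̄η - λ⁻¹ i∂η∧∂̄η ≥ i∂∂̄φ`, i.e. the difference of the
associated Hermitian forms is positive semidefinite at every point of `Ω`. -/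
theorem eta_hessian_inequality
    (Ω : Set (Fin n → ℂ)) (hΩopen : IsOpen Ω) (hΩbdd : Bornology.IsBounded Ω)
    (h0 : (0 : Fin n → ℂ) ∈ Ω)
    (hnorm : ∀ z ∈ Ω, Real.sqrt (normSq z) < Real.exp (-1))
    (ε : ℝ) (hε : 0 < ε) (hεsmall : ε ^ 2 < 1 - Real.exp (-2))
    (φ η lam : (Fin n → ℂ) → ℝ)
    (hφ : ∀ z, φ z = Real.log (normSq z + ε ^ 2))
    (hη : ∀ z, η z = -φ z + Real.log (-φ z))
    (hlam : ∀ z, lam z = (1 - φ z) ^ 2) :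
    ∀ z ∈ Ω, ∀ ζ : Fin n → ℂ,
      (∑ j : Fin n, ∑ k : Fin n, (hess j k φ z) * ζ j * (starRingEnd ℂ) (ζ k)).re ≤
      (∑ j : Fin n, ∑ k : Fin n,
        (-(hess j k η z) - ((lam z : ℝ) : ℂ)⁻¹ *
          (dz j (fun y => ((η y : ℝ) : ℂ)) z) *
          (starRingEnd ℂ) (dz k (fun y => ((η y : ℝ) : ℂ)) z)) *
        ζ j * (starRingEnd ℂ) (ζ k)).re :=
  eta_hessian_inequality_general Ω hnorm ε hε hεsmall φ η lam hφ hη hlam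
end

section
/- Let E be a compact polar subset of the unit disc 𝔻 ⊂ ℂ, let A(r,1) = {r < |z_{n+1}| < 1} with E ⊂ 𝔻_r, and let f be holomorphic on 𝔻ⁿ × A(r,1). Suppose there exists a set A ⊂ 𝔻ⁿ of positive Lebesgue measure such that for every z' ∈ A the function f(z', ·) extends holomorphically to 𝔻. Then f extends to a holomorphic function on 𝔻^{n+1}. -/
open MeasureTheory Metric

/-- Subharmonicity of an `EReal`-valued function on a subset of `ℂ`. -/
def SubharmonicOn (f : ℂ → EReal) (s : Set ℂ) : Prop :=
  UpperSemicontinuousOn f s ∧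
  ∀ x ∈ s, ∀ r > (0 : ℝ), closedBall x r ⊆ s →
    f x ≤ ((⨍ y in closedBall x r, (f y).toReal) : ℝ)

/-- `E ⊆ ℂ` is polar. -/
def IsPolar (E : Set ℂ) : Prop :=
  ∀ x ∈ E, ∃ U : Set ℂ, IsOpen U ∧ x ∈ U ∧
    ∃ ψ : ℂ → EReal, SubharmonicOn ψ U ∧ ¬ (∀ z ∈ U, ψ z = ⊥) ∧ ∀ z ∈ E ∩ U, ψ z = ⊥

/-- The open unit polydisc in `ℂⁿ`. -/
def polydisc (n : ℕ) : Set (Fin n → ℂ) := {z | ∀ i, ‖z i‖ < 1}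

/-!
Fix `ρ ∈ (r, 1)`. The Cauchy integral `G(z', w) = (2πi)⁻¹ ∮_{|ζ| = ρ} f(z', ζ) / (ζ - w) dζ` is
holomorphic in `(z', w)` on `𝔻ⁿ × 𝔻_ρ`: it is the sum `∑_{k ≥ 0} a_k(z') wᵏ` of the regular part
of the Laurent expansion of `f(z', ·)`. When `f(z', ·)` extends holomorphically to `𝔻`, the
Cauchy integral formula gives `G(z', ·) = f(z', ·)` on `{r < |w| < ρ}`, i.e. the principal part
vanishes. This happens for `z'` in a set of positive measure, and the zero set of a holomorphic
function on the polydisc that is not identically zero is a null set (by Fubini and induction on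
the dimension, zeros of one-variable holomorphic functions being discrete), so `G = f` on all of
`𝔻ⁿ × {r < |w| < ρ}`. Gluing `G` and `f` along this set gives the extension.
-/

open Filter Set
open scoped Real

lemma polydisc_eq_pi (n : ℕ) : polydisc n = univ.pi fun _ => ball (0 : ℂ) 1 := by
  ext z; simp [polydisc]

lemma isOpen_polydisc (n : ℕ) : IsOpen (polydisc n) := by
  rw [polydisc_eq_pi]; exact isOpen_set_pi finite_univ fun _ _ => isOpen_ball

lemma cons_mem_polydisc_iff {n : ℕ} {w : ℂ} {y : Fin n → ℂ} :
    (Fin.cons w y : Fin (n + 1) → ℂ) ∈ polydisc (n + 1) ↔ w ∈ ball (0 : ℂ) 1 ∧ y ∈ polydisc n := by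
  simp [polydisc, Fin.forall_fin_succ]

lemma differentiable_cons (n : ℕ) :
    Differentiable ℂ fun q : ℂ × (Fin n → ℂ) => (Fin.cons q.1 q.2 : Fin (n + 1) → ℂ) := by
  rw [differentiable_pi]
  refine Fin.cases ?_ fun j => ?_
  · simp only [Fin.cons_zero]
    fun_prop
  · simp only [Fin.cons_succ]
    fun_prop

lemma ContinuousOn.measurableSet_sep_eq_zero {X E : Type*} [TopologicalSpace X] [MeasurableSpace X]
    [OpensMeasurableSpace X] [NormedAddCommGroup E] {U : Set X} {g : X → E}
    (hg : ContinuousOn g U) (hU : IsOpen U) : MeasurableSet {x ∈ U | g x = 0} := by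
  have : {x ∈ U | g x = 0} = U \ (U ∩ g ⁻¹' {0}ᶜ) := by ext; simp
  rw [this]
  exact hU.measurableSet.diff (hg.isOpen_inter_preimage hU isOpen_compl_singleton).measurableSet

lemma ae_restrict_ne_zero_of_differentiableOn {E : Type*} [NormedAddCommGroup E] [NormedSpace ℂ E]
    [CompleteSpace E] {U : Set ℂ} {g : ℂ → E} (hU : IsOpen U) (hU' : IsPreconnected U)
    (hg : DifferentiableOn ℂ g U) {w₀ : ℂ} (hw₀ : w₀ ∈ U) (hgw₀ : g w₀ ≠ 0) :
    ∀ᵐ w ∂volume.restrict U, g w ≠ 0 :=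
  ae_restrict_le_codiscreteWithin hU.measurableSet <|
    ((hg.analyticOnNhd hU).eqOn_zero_or_eventually_ne_zero_of_preconnected hU').resolve_left
      fun h => hgw₀ (h hw₀)

theorem volume_zeros_polydisc_eq_zero : ∀ {n : ℕ} {g : (Fin n → ℂ) → ℂ},
    DifferentiableOn ℂ g (polydisc n) → ∀ {a : Fin n → ℂ}, a ∈ polydisc n → g a ≠ 0 →
    volume {z ∈ polydisc n | g z = 0} = 0
  | 0, g, _, a, _, hga => by
    convert measure_empty (μ := volume)
    ext z
    rw [Subsingleton.elim z a]
    simpa using fun _ => hga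
  | n + 1, g, hg, a, ha, hga => by
    set cons : ℂ × (Fin n → ℂ) → (Fin (n + 1) → ℂ) := fun q => Fin.cons q.1 q.2
    have hcons : Differentiable ℂ cons := differentiable_cons n
    set Z : Set (ℂ × (Fin n → ℂ)) := cons ⁻¹' {z ∈ polydisc (n + 1) | g z = 0}
    have hvol : volume Z = volume {z ∈ polydisc (n + 1) | g z = 0} := by
      have := (volume_preserving_piFinSuccAbove (fun _ : Fin (n + 1) => ℂ) 0).symm
      convert this.measure_preimage_equiv _
      ext q
      simp [cons]
    have hZ : MeasurableSet Z :=
      (hg.continuousOn.measurableSet_sep_eq_zero (isOpen_polydisc _)).preimage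
        hcons.continuous.measurable
    rw [← hvol, Measure.volume_eq_prod, Measure.measure_prod_null hZ]
    have ha' := cons_mem_polydisc_iff.1 (by simpa [cons] using ha : cons (a 0, Fin.tail a) ∈ _)
    have hfirst : ∀ᵐ w ∂volume.restrict (ball (0 : ℂ) 1), g (cons (w, Fin.tail a)) ≠ 0 := by
      refine ae_restrict_ne_zero_of_differentiableOn isOpen_ball (convex_ball _ _).isPreconnected
        ?_ ha'.1 (by simpa [cons] using hga)
      exact hg.comp (hcons.comp (differentiable_id.prodMk (differentiable_const _))).differentiableOn
        fun w hw => cons_mem_polydisc_iff.2 ⟨hw, ha'.2⟩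
    filter_upwards [(ae_restrict_iff' measurableSet_ball).1 hfirst] with w hw
    by_cases hwb : w ∈ ball (0 : ℂ) 1
    · have hslice : DifferentiableOn ℂ (fun y => g (cons (w, y))) (polydisc n) :=
        hg.comp (hcons.comp ((differentiable_const _).prodMk differentiable_id)).differentiableOn
          fun y hy => cons_mem_polydisc_iff.2 ⟨hwb, hy⟩
      refine measure_mono_null ?_ (volume_zeros_polydisc_eq_zero hslice ha'.2 (hw hwb))
      exact fun y hy => ⟨(cons_mem_polydisc_iff.1 hy.1).2, hy.2⟩
    · show _ = 0
      convert measure_empty (μ := volume)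
      ext y
      simp only [Z, mem_preimage, mem_ofPred_eq, cons, cons_mem_polydisc_iff]
      tauto

theorem eqOn_polydisc_of_eqOn_of_volume_pos {n : ℕ} {g₁ g₂ : (Fin n → ℂ) → ℂ}
    (hg₁ : DifferentiableOn ℂ g₁ (polydisc n)) (hg₂ : DifferentiableOn ℂ g₂ (polydisc n))
    {S : Set (Fin n → ℂ)} (hS : S ⊆ polydisc n) (hSpos : 0 < volume S) (hgS : EqOn g₁ g₂ S) :
    EqOn g₁ g₂ (polydisc n) := by
  intro a ha
  by_contra hne
  refine hSpos.ne' (measure_mono_null ?_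
    (volume_zeros_polydisc_eq_zero (hg₁.sub hg₂) ha (sub_ne_zero.2 hne)))
  exact fun z hz => ⟨hS hz, sub_eq_zero.2 (hgS hz)⟩

section ParametricCircleIntegral

variable {X : Type*}

theorem IsCompact.exists_thickening_forall_norm_fderiv_le [NormedAddCommGroup X] [NormedSpace ℂ X]
    [ProperSpace X] {E : Type*}
    [NormedAddCommGroup E] [NormedSpace ℂ E] {g : X → E} {V K : Set X} (hK : IsCompact K)
    (hV : IsOpen V) (hKV : K ⊆ V) (hg : DifferentiableOn ℂ g V) :
    ∃ ε > 0, ∃ C, thickening ε K ⊆ V ∧ ∀ x ∈ thickening ε K, ‖fderiv ℂ g x‖ ≤ C := by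
  obtain ⟨δ, hδ, hδV⟩ := hK.exists_thickening_subset_open hV hKV
  have hK' : cthickening (δ / 2) K ⊆ V :=
    (cthickening_subset_thickening' hδ (by linarith) K).trans hδV
  obtain ⟨M, hM⟩ := hK.cthickening.exists_bound_of_continuousOn (hg.continuousOn.mono hK')
  refine ⟨δ / 4, by positivity, 2 * M / (δ / 4),
    (thickening_mono (by linarith) K).trans hδV, fun x hx => ?_⟩
  have hball : ball x (δ / 4) ⊆ cthickening (δ / 2) K :=
    (ball_subset_thickening hx _).trans <| (thickening_thickening_subset _ _ _).trans <|
      (thickening_subset_cthickening _ _).trans (by ring_nf; rfl)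
  refine Complex.norm_fderiv_le_div_of_mapsTo_ball (R₂ := 2 * M) (hg.mono (hball.trans hK'))
    (fun y hy => ?_) (by positivity)
  rw [mem_closedBall, dist_eq_norm]
  calc ‖g y - g x‖ ≤ ‖g y‖ + ‖g x‖ := norm_sub_le _ _
    _ ≤ M + M := add_le_add (hM y (hball hy)) (hM x (hball (mem_ball_self (by positivity))))
    _ = 2 * M := by ring

theorem differentiableAt_circleIntegral_of_differentiableOn [NormedAddCommGroup X]
    [NormedSpace ℂ X] [FiniteDimensional ℂ X]
    {g : X × ℂ → ℂ} {V : Set (X × ℂ)} (hV : IsOpen V) (hg : DifferentiableOn ℂ g V)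
    {c : ℂ} {R : ℝ} {x₀ : X} (hx₀ : ∀ ζ ∈ sphere c |R|, (x₀, ζ) ∈ V) :
    DifferentiableAt ℂ (fun x => ∮ ζ in C(c, R), g (x, ζ)) x₀ := by
  obtain ⟨ε, hε, C, hεV, hC⟩ := (isCompact_singleton.prod (isCompact_sphere c |R|))
    |>.exists_thickening_forall_norm_fderiv_le hV (by simpa [prod_subset_iff] using hx₀) hg
  have hnear : ∀ x ∈ ball x₀ ε, ∀ θ : ℝ,
      (x, circleMap c R θ) ∈ thickening ε ({x₀} ×ˢ sphere c |R|) := by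
    intro x hx θ
    refine mem_thickening_iff.2 ⟨(x₀, circleMap c R θ), ⟨rfl, circleMap_mem_sphere' c R θ⟩, ?_⟩
    simpa [Prod.dist_eq] using hx
  set F : X → ℝ → ℂ := fun x θ => deriv (circleMap c R) θ • g (x, circleMap c R θ)
  set F' : X → ℝ → X →L[ℂ] ℂ := fun x θ => deriv (circleMap c R) θ •
    (fderiv ℂ g (x, circleMap c R θ)).comp (ContinuousLinearMap.inl ℂ X ℂ)
  have hF' : ∀ x ∈ ball x₀ ε, ∀ θ, HasFDerivAt (F · θ) (F' x θ) x := fun x hx θ => by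
    have := (hg.differentiableAt (hV.mem_nhds (hεV (hnear x hx θ)))).hasFDerivAt.comp x
      (hasFDerivAt_prodMk_left (𝕜 := ℂ) x (circleMap c R θ))
    exact this.const_smul (deriv (circleMap c R) θ)
  have hF_cont : ∀ x ∈ ball x₀ ε, Continuous (F x) := fun x hx => by
    simp only [F, deriv_circleMap]
    exact ((continuous_circleMap 0 R).mul continuous_const).smul <|
      hg.continuousOn.comp_continuous (continuous_const.prodMk (continuous_circleMap c R))
        fun θ => hεV (hnear x hx θ)
  have hF'_meas : AEStronglyMeasurable (F' x₀) (volume.restrict (uIoc 0 (2 * π))) := by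
    borelize (X × ℂ)
    have hmeas : Measurable fun θ => fderiv ℂ g (x₀, circleMap c R θ) :=
      (measurable_fderiv ℂ g).comp (continuous_const.prodMk (continuous_circleMap c R)).measurable
    have hcomp : Continuous fun L : X × ℂ →L[ℂ] ℂ => L.comp (ContinuousLinearMap.inl ℂ X ℂ) :=
      ((ContinuousLinearMap.compL ℂ X (X × ℂ) ℂ).flip _).continuous
    simp only [F', deriv_circleMap]
    exact ((continuous_circleMap 0 R).mul continuous_const).aestronglyMeasurable.smul
      (hcomp.measurable.comp hmeas).aestronglyMeasurable
  have hF'_le : ∀ x ∈ ball x₀ ε, ∀ θ, ‖F' x θ‖ ≤ |R| * C := fun x hx θ => by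
    simp only [F', norm_smul, deriv_circleMap, norm_mul, norm_circleMap_zero, Complex.norm_I,
      mul_one]
    gcongr
    calc _ ≤ ‖fderiv ℂ g (x, circleMap c R θ)‖ * ‖ContinuousLinearMap.inl ℂ X ℂ‖ :=
          ContinuousLinearMap.opNorm_comp_le _ _
      _ ≤ C * 1 := mul_le_mul (hC _ (hnear x hx θ)) (ContinuousLinearMap.norm_inl_le_one ℂ X ℂ)
          (norm_nonneg _) ((norm_nonneg _).trans (hC _ (hnear x hx θ)))
      _ = C := mul_one C
  exact (intervalIntegral.hasFDerivAt_integral_of_dominated_of_fderiv_le (ball_mem_nhds x₀ hε)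
    (eventually_of_mem (ball_mem_nhds x₀ hε) fun x hx => (hF_cont x hx).aestronglyMeasurable)
    ((hF_cont x₀ (mem_ball_self hε)).intervalIntegrable _ _) hF'_meas
    (ae_of_all _ fun θ _ x hx => hF'_le x hx θ) intervalIntegrable_const
    (ae_of_all _ fun θ _ x hx => hF' x hx θ)).differentiableAt

noncomputable def cauchyIntegralLast (f : X × ℂ → ℂ) (ρ : ℝ) (p : X × ℂ) : ℂ :=
  (2 * π * Complex.I)⁻¹ • ∮ ζ in C(0, ρ), (ζ - p.2)⁻¹ • f (p.1, ζ)

theorem differentiableAt_cauchyIntegralLast [NormedAddCommGroup X] [NormedSpace ℂ X]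
    [FiniteDimensional ℂ X] {f : X × ℂ → ℂ}
    {U : Set (X × ℂ)} (hU : IsOpen U) (hf : DifferentiableOn ℂ f U) {ρ : ℝ} {p : X × ℂ}
    (hp : ‖p.2‖ < ρ) (hsphere : ∀ ζ ∈ sphere (0 : ℂ) ρ, (p.1, ζ) ∈ U) :
    DifferentiableAt ℂ (cauchyIntegralLast f ρ) p := by
  set V : Set ((X × ℂ) × ℂ) := {q | (q.1.1, q.2) ∈ U ∧ q.1.2 ≠ q.2}
  have hV : IsOpen V :=
    (hU.preimage (by fun_prop)).inter (isOpen_ne_fun (by fun_prop) (by fun_prop))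
  have hg : DifferentiableOn ℂ (fun q : (X × ℂ) × ℂ => (q.2 - q.1.2)⁻¹ • f (q.1.1, q.2)) V :=
    fun q hq => by
      have hsub : DifferentiableAt ℂ (fun q : (X × ℂ) × ℂ => q.2 - q.1.2) q := by fun_prop
      have hproj : DifferentiableAt ℂ (fun q : (X × ℂ) × ℂ => (q.1.1, q.2)) q := by fun_prop
      exact ((hsub.inv (sub_ne_zero.2 hq.2.symm)).smul
        ((hf.differentiableAt (hU.mem_nhds hq.1)).comp q hproj)).differentiableWithinAt
  refine (differentiableAt_circleIntegral_of_differentiableOn (c := 0) (R := ρ) (x₀ := p) hV hg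
    fun ζ hζ => ?_).const_smul ((2 * π * Complex.I)⁻¹ : ℂ)
  rw [abs_of_pos ((norm_nonneg _).trans_lt hp), mem_sphere_zero_iff_norm] at hζ
  exact ⟨hsphere ζ (mem_sphere_zero_iff_norm.2 hζ), fun h => hp.ne (h ▸ hζ)⟩

theorem cauchyIntegralLast_eq_of_eqOn_sphere {f : X × ℂ → ℂ} {h : ℂ → ℂ} {U : Set ℂ} {ρ : ℝ}
    (hh : DifferentiableOn ℂ h U) (hρU : closedBall 0 ρ ⊆ U) {z : X}
    (hfh : ∀ ζ ∈ sphere (0 : ℂ) ρ, f (z, ζ) = h ζ) {w : ℂ} (hw : w ∈ ball (0 : ℂ) ρ) :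
    cauchyIntegralLast f ρ (z, w) = h w := by
  rw [cauchyIntegralLast, circleIntegral.integral_congr (g := fun ζ => (ζ - w)⁻¹ • h ζ)
    (pos_of_mem_ball hw).le fun ζ hζ => by simp only [hfh ζ hζ]]
  exact (hh.diffContOnCl_ball hρU).two_pi_i_inv_smul_circleIntegral_sub_inv_smul hw

end ParametricCircleIntegral

theorem exists_differentiableOn_union_of_eqOn {𝕜 X E : Type*} [NontriviallyNormedField 𝕜]
    [NormedAddCommGroup X] [NormedSpace 𝕜 X] [NormedAddCommGroup E] [NormedSpace 𝕜 E]
    {A B : Set X} (hA : IsOpen A) (hB : IsOpen B) {f g : X → E} (hf : DifferentiableOn 𝕜 f A)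
    (hg : DifferentiableOn 𝕜 g B) (hfg : EqOn f g (A ∩ B)) :
    ∃ F : X → E, DifferentiableOn 𝕜 F (A ∪ B) ∧ EqOn F f A ∧ EqOn F g B := by
  classical
  have hFg : EqOn (A.piecewise f g) g B := fun x hx => by
    by_cases hxA : x ∈ A
    · rw [piecewise_eq_of_mem _ _ _ hxA, hfg ⟨hxA, hx⟩]
    · rw [piecewise_eq_of_notMem _ _ _ hxA]
  refine ⟨A.piecewise f g, ?_, fun x hx => piecewise_eq_of_mem _ _ _ hx, hFg⟩
  rintro x (hx | hx)
  · exact ((hf.differentiableAt (hA.mem_nhds hx)).congr_of_eventuallyEq <|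
      eventually_of_mem (hA.mem_nhds hx) fun y hy => piecewise_eq_of_mem _ _ _ hy)
      |>.differentiableWithinAt
  · exact ((hg.differentiableAt (hB.mem_nhds hx)).congr_of_eventuallyEq <|
      eventually_of_mem (hB.mem_nhds hx) hFg).differentiableWithinAt

theorem hartogs_laurent_extension_general {n : ℕ} (r : ℝ) (hr1 : r < 1)
    (f : (Fin n → ℂ) × ℂ → ℂ)
    (hf : DifferentiableOn ℂ f
      (polydisc n ×ˢ {w : ℂ | r < ‖w‖ ∧ ‖w‖ < 1}))
    (S : Set (Fin n → ℂ)) (hS : S ⊆ polydisc n) (hSmeas : 0 < volume S)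
    (hslice : ∀ z' ∈ S, ∃ g : ℂ → ℂ, DifferentiableOn ℂ g (ball (0 : ℂ) 1) ∧
      ∀ w : ℂ, r < ‖w‖ → ‖w‖ < 1 → g w = f (z', w)) :
    ∃ F : (Fin n → ℂ) × ℂ → ℂ,
      DifferentiableOn ℂ F (polydisc n ×ˢ ball (0 : ℂ) 1) ∧
      ∀ p ∈ polydisc n ×ˢ {w : ℂ | r < ‖w‖ ∧ ‖w‖ < 1}, F p = f p := by
  obtain ⟨ρ, hrρ, hρ1⟩ := exists_between hr1
  have hannulus : IsOpen (polydisc n ×ˢ {w : ℂ | r < ‖w‖ ∧ ‖w‖ < 1}) :=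
    (isOpen_polydisc n).prod <|
      (isOpen_lt continuous_const continuous_norm).inter (isOpen_lt continuous_norm continuous_const)
  set G := cauchyIntegralLast f ρ
  have hG : DifferentiableOn ℂ G (polydisc n ×ˢ ball 0 ρ) := fun p hp =>
    (differentiableAt_cauchyIntegralLast hannulus hf (mem_ball_zero_iff.1 hp.2) fun ζ hζ =>
      ⟨hp.1, by simpa [mem_sphere_zero_iff_norm.1 hζ] using ⟨hrρ, hρ1⟩⟩).differentiableWithinAt
  have hGf : EqOn G f (polydisc n ×ˢ ball 0 ρ ∩ polydisc n ×ˢ {w : ℂ | r < ‖w‖ ∧ ‖w‖ < 1}) := by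
    rintro ⟨z, w⟩ ⟨⟨hz, hwρ⟩, -, hrw, hw1⟩
    have hGw : DifferentiableOn ℂ (fun z => G (z, w)) (polydisc n) :=
      hG.comp (differentiableOn_id.prodMk (differentiableOn_const w)) fun z hz => ⟨hz, hwρ⟩
    have hfw : DifferentiableOn ℂ (fun z => f (z, w)) (polydisc n) :=
      hf.comp (differentiableOn_id.prodMk (differentiableOn_const w)) fun z hz => ⟨hz, hrw, hw1⟩
    refine eqOn_polydisc_of_eqOn_of_volume_pos hGw hfw hS hSmeas (fun z hzS => ?_) hz
    obtain ⟨g, hg, hgf⟩ := hslice z hzS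
    change G (z, w) = f (z, w)
    rw [← hgf w hrw hw1]
    refine cauchyIntegralLast_eq_of_eqOn_sphere hg (closedBall_subset_ball hρ1) (fun ζ hζ => ?_) hwρ
    rw [mem_sphere_zero_iff_norm] at hζ
    exact (hgf ζ (hζ ▸ hrρ) (hζ ▸ hρ1)).symm
  obtain ⟨F, hF, -, hFf⟩ := exists_differentiableOn_union_of_eqOn
    ((isOpen_polydisc n).prod isOpen_ball) hannulus hG hf hGf
  refine ⟨F, hF.mono fun p ⟨hp, hp1⟩ => ?_, hFf⟩
  rcases lt_or_ge ‖p.2‖ ρ with hpρ | hpρ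
  exacts [Or.inl ⟨hp, mem_ball_zero_iff.2 hpρ⟩,
    Or.inr ⟨hp, hrρ.trans_le hpρ, mem_ball_zero_iff.1 hp1⟩]

/-- Let `E` be a compact polar subset of `𝔻_r ⊂ 𝔻 ⊂ ℂ`, `A(r,1) = {r < |w| < 1}`, and
`f` holomorphic on `𝔻ⁿ × A(r,1)`. If there is a set `S ⊆ 𝔻ⁿ` of positive Lebesgue
measure such that `f(z',·)` extends holomorphically to `𝔻` for every `z' ∈ S`, then
`f` extends holomorphically to `𝔻^{n+1}`. -/
theorem hartogs_laurent_extension {n : ℕ} (r : ℝ) (hr : 0 < r) (hr1 : r < 1)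
    (E : Set ℂ) (hEr : E ⊆ ball (0 : ℂ) r) (hEcomp : IsCompact E) (hEpolar : IsPolar E)
    (f : (Fin n → ℂ) × ℂ → ℂ)
    (hf : DifferentiableOn ℂ f
      (polydisc n ×ˢ {w : ℂ | r < ‖w‖ ∧ ‖w‖ < 1}))
    (S : Set (Fin n → ℂ)) (hS : S ⊆ polydisc n) (hSmeas : 0 < volume S)
    (hslice : ∀ z' ∈ S, ∃ g : ℂ → ℂ, DifferentiableOn ℂ g (ball (0 : ℂ) 1) ∧
      ∀ w : ℂ, r < ‖w‖ → ‖w‖ < 1 → g w = f (z', w)) :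
    ∃ F : (Fin n → ℂ) × ℂ → ℂ,
      DifferentiableOn ℂ F (polydisc n ×ˢ ball (0 : ℂ) 1) ∧
      ∀ p ∈ polydisc n ×ˢ {w : ℂ | r < ‖w‖ ∧ ‖w‖ < 1}, F p = f p :=
  hartogs_laurent_extension_general r hr1 f hf S hS hSmeas hslice
end
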